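/- arXiv:1203.5809 — 7 statements merged into one kernel-verified Lean document; each statement's English description precedes it below -/
import Mathlib

section
/- Let ρ ∈ ℝ, let (Ω, F, P) be a probability space, let (E, ℰ) be a measurable space, let (t_n)_{n≥0} be a non-decreasing real sequence, let ζ : [0,∞) → (0,∞] be a function, let V : E → [0,∞) be measurable, and let Y : ℕ₀ × Ω → E and Z : ℕ × Ω → ℝ be stochastic processes such that E[1_{Ω_n}|Z_n|] < ∞ and 1_{Ω_n} V(Y_n) ≤ e^{ρ(t_n - t_{n-1})} V(Y_{n-1}) + 1_{Ω_n} Z_n for all n ≥ 1, where Ω_n := ⋂_{k=0}^{n-1} {V(Y_k) ≤ ζ(t_{k+1} - t_k)}. Then for all n ≥ 0: 1_{Ω_n} V(Y_n) ≤ e^{ρ(t_n - t_0)} V(Y_0) + Σ_{k=1}^{n} e^{ρ(t_n - t_k)} 1_{Ω_k} Z_k. -/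
open MeasureTheory ENNReal

/-- The event that `V(Y_k) ≤ ζ(t_{k+1} - t_k)` holds for all `k ∈ {0, …, n-1}`
(for `n = 0` this is the whole space). -/
def rareEvent {Ω E : Type*} (V : E → ℝ) (Y : ℕ → Ω → E) (ζ : ℝ → ℝ≥0∞)
    (t : ℕ → ℝ) (n : ℕ) : Set Ω :=
  ⋂ k ∈ Finset.range n, {ω | ENNReal.ofReal (V (Y k ω)) ≤ ζ (t (k + 1) - t k)}

/-!
With `a n = 1_{Ω_n} V(Y_n)` and `b n = 1_{Ω_n} Z_n`, multiplying the hypothesis by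
`1_{Ω_{n+1}} ≤ 1_{Ω_n}` (and using `V ≥ 0`) gives the linear recursion
`a (n+1) ≤ exp (ρ (t_{n+1} - t_n)) a n + b (n+1)`. Unrolling it is a discrete Gronwall argument
in which the exponential weights telescope to `exp (ρ (t_n - t_k))`.
-/

theorem le_exp_mul_add_sum_of_le_exp_mul_add {a b f : ℕ → ℝ}
    (h : ∀ n, a (n + 1) ≤ Real.exp (f (n + 1) - f n) * a n + b (n + 1)) (n : ℕ) :
    a n ≤ Real.exp (f n - f 0) * a 0
      + ∑ k ∈ Finset.Icc 1 n, Real.exp (f n - f k) * b k := by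
  induction n with
  | zero => simp
  | succ n ih =>
    have hexp : ∀ m, Real.exp (f (n + 1) - f n) * Real.exp (f n - f m)
        = Real.exp (f (n + 1) - f m) := fun m => by rw [← Real.exp_add]; ring_nf
    calc a (n + 1) ≤ Real.exp (f (n + 1) - f n) * a n + b (n + 1) := h n
      _ ≤ Real.exp (f (n + 1) - f n) * (Real.exp (f n - f 0) * a 0
            + ∑ k ∈ Finset.Icc 1 n, Real.exp (f n - f k) * b k) + b (n + 1) := by
          gcongr
      _ = Real.exp (f (n + 1) - f 0) * a 0
            + ∑ k ∈ Finset.Icc 1 (n + 1), Real.exp (f (n + 1) - f k) * b k := by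
          rw [Finset.sum_Icc_succ_top (by omega), mul_add, Finset.mul_sum, ← mul_assoc, hexp,
            sub_self, Real.exp_zero, one_mul, add_assoc]
          simp only [← mul_assoc, hexp]

section rareEvent

variable {Ω E : Type*} (V : E → ℝ) (Y : ℕ → Ω → E) (ζ : ℝ → ℝ≥0∞) (t : ℕ → ℝ)

theorem rareEvent_zero : rareEvent V Y ζ t 0 = Set.univ := by
  simp [rareEvent]

theorem rareEvent_antitone : Antitone (rareEvent V Y ζ t) := fun _ _ hmn =>
  Set.biInter_subset_biInter_left (by simpa using Finset.range_mono hmn)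

end rareEvent

theorem indicator_mul_le_of_subset {Ω : Type*} {s s' : Set Ω} (hs : s' ⊆ s) {ω : Ω}
    {c v v' z : ℝ} (hc : 0 ≤ c) (hv : 0 ≤ v)
    (h : s'.indicator 1 ω * v' ≤ c * v + s'.indicator 1 ω * z) :
    s'.indicator 1 ω * v' ≤ c * (s.indicator 1 ω * v) + s'.indicator 1 ω * z := by
  by_cases hω : ω ∈ s'
  · simpa [hω, hs hω] using h
  · simp only [Set.indicator_of_notMem hω, zero_mul, add_zero]
    exact mul_nonneg hc (mul_nonneg (Set.indicator_nonneg (fun _ _ => zero_le_one) ω) hv)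

theorem stmt0_general {Ω E : Type*}
    (ρ : ℝ) (t : ℕ → ℝ)
    (ζ : ℝ → ℝ≥0∞)
    (V : E → ℝ) (hVnn : ∀ e, 0 ≤ V e)
    (Y : ℕ → Ω → E)
    (Z : ℕ → Ω → ℝ)
    (hLyap : ∀ n ω,
      Set.indicator (rareEvent V Y ζ t (n + 1)) (fun _ => (1 : ℝ)) ω * V (Y (n + 1) ω)
        ≤ Real.exp (ρ * (t (n + 1) - t n)) * V (Y n ω)
          + Set.indicator (rareEvent V Y ζ t (n + 1)) (fun _ => (1 : ℝ)) ω * Z (n + 1) ω) :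
    ∀ n ω,
      Set.indicator (rareEvent V Y ζ t n) (fun _ => (1 : ℝ)) ω * V (Y n ω)
        ≤ Real.exp (ρ * (t n - t 0)) * V (Y 0 ω)
          + ∑ k ∈ Finset.Icc 1 n,
              Real.exp (ρ * (t n - t k))
                * (Set.indicator (rareEvent V Y ζ t k) (fun _ => (1 : ℝ)) ω * Z k ω) := by
  intro n ω
  set a : ℕ → ℝ := fun n => (rareEvent V Y ζ t n).indicator (fun _ => 1) ω * V (Y n ω)
  set b : ℕ → ℝ := fun n => (rareEvent V Y ζ t n).indicator (fun _ => 1) ω * Z n ω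
  have hstep : ∀ n, a (n + 1) ≤ Real.exp (ρ * t (n + 1) - ρ * t n) * a n + b (n + 1) := fun n => by
    rw [← mul_sub]
    exact indicator_mul_le_of_subset (rareEvent_antitone V Y ζ t n.le_succ)
      (Real.exp_pos _).le (hVnn _) (hLyap n ω)
  simpa only [a, b, mul_sub, rareEvent_zero, Set.indicator_univ, one_mul] using
    le_exp_mul_add_sum_of_le_exp_mul_add (f := fun n => ρ * t n) hstep n

/-- Pathwise Lyapunov-type estimate on complements of rare events. -/
theorem stmt0 {Ω E : Type*} [MeasurableSpace Ω] [MeasurableSpace E]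
    (P : Measure Ω) [IsProbabilityMeasure P]
    (ρ : ℝ) (t : ℕ → ℝ) (ht : Monotone t)
    (ζ : ℝ → ℝ≥0∞) (hζ : ∀ s, 0 < ζ s)
    (V : E → ℝ) (hV : Measurable V) (hVnn : ∀ e, 0 ≤ V e)
    (Y : ℕ → Ω → E) (hY : ∀ n, Measurable (Y n))
    (Z : ℕ → Ω → ℝ) (hZ : ∀ n, Measurable (Z n))
    (hZint : ∀ n, 1 ≤ n →
      Integrable
        (fun ω => Set.indicator (rareEvent V Y ζ t n) (fun _ => (1 : ℝ)) ω * |Z n ω|) P)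
    (hLyap : ∀ n ω,
      Set.indicator (rareEvent V Y ζ t (n + 1)) (fun _ => (1 : ℝ)) ω * V (Y (n + 1) ω)
        ≤ Real.exp (ρ * (t (n + 1) - t n)) * V (Y n ω)
          + Set.indicator (rareEvent V Y ζ t (n + 1)) (fun _ => (1 : ℝ)) ω * Z (n + 1) ω) :
    ∀ n ω,
      Set.indicator (rareEvent V Y ζ t n) (fun _ => (1 : ℝ)) ω * V (Y n ω)
        ≤ Real.exp (ρ * (t n - t 0)) * V (Y 0 ω)
          + ∑ k ∈ Finset.Icc 1 n,
              Real.exp (ρ * (t n - t k))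
                * (Set.indicator (rareEvent V Y ζ t k) (fun _ => (1 : ℝ)) ω * Z k ω) :=
  stmt0_general ρ t ζ V hVnn Y Z hLyap
end

section
/- Let T ∈ (0,∞), c ∈ [0,∞), p ∈ [1,∞), and let y : [0,T] → ℝ be an absolutely continuous function with y'(t) ≤ c |y(t)|^{1 - 1/p} for Lebesgue-almost all t ∈ [0,T]. Then y(t) ≤ (|y(0)|^{1/p} + c t / p)^p ≤ 2^{p-1}(|y(0)| + (c t / p)^p) for all t ∈ [0,T]. -/
/-!
The barrier `w t = (a + c t / p) ^ p` solves `w' = c w ^ (1 - 1/p)` exactly. If `|y 0| ^ (1/p) < a`,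
then `y < w` on `[0, T]`: at the first time `t₁` where `y` reaches `w`, `y` is positive on some
`[s, t₁]`, so there `y' ≤ c |y| ^ (1 - 1/p) ≤ c w ^ (1 - 1/p) = w'` a.e., and integrating from `s`
to `t₁` contradicts `y s < w s`. Letting `a` decrease to `|y 0| ^ (1/p)` gives the first bound; the
second is the power-mean inequality `(x + z) ^ p ≤ 2 ^ (p - 1) (x ^ p + z ^ p)`.
-/

open MeasureTheory Set Topology

theorem Real.rpow_add_le_two_rpow_mul_add {a b p : ℝ} (ha : 0 ≤ a) (hb : 0 ≤ b) (hp : 1 ≤ p) :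
    (a + b) ^ p ≤ 2 ^ (p - 1) * (a ^ p + b ^ p) := by
  lift a to NNReal using ha
  lift b to NNReal using hb
  exact_mod_cast NNReal.rpow_add_le_mul_rpow_add_rpow a b hp

theorem exists_first_le_of_continuousOn {f g : ℝ → ℝ} {a b : ℝ} (hab : a ≤ b)
    (hf : ContinuousOn f (Icc a b)) (hg : ContinuousOn g (Icc a b))
    (ha : f a < g a) (hb : g b ≤ f b) :
    ∃ c ∈ Ioc a b, g c ≤ f c ∧ ∀ r ∈ Ico a c, f r < g r := by
  set S := {x ∈ Icc a b | g x ≤ f x}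
  have hS_bdd : BddBelow S := ⟨a, fun x hx => hx.1.1⟩
  obtain ⟨⟨hac, hcb⟩, hc⟩ : sInf S ∈ S :=
    (isClosed_Icc.isClosed_le hg hf).csInf_mem ⟨b, ⟨hab, le_rfl⟩, hb⟩ hS_bdd
  refine ⟨sInf S, ⟨hac.lt_of_ne ?_, hcb⟩, hc, fun r hr => ?_⟩
  · rintro h
    exact (h ▸ hc).not_gt ha
  · by_contra! hr'
    exact (csInf_le hS_bdd ⟨⟨hr.1, hr.2.le.trans hcb⟩, hr'⟩).not_gt hr.2

theorem ContinuousOn.exists_Ioo_pos_left {f : ℝ → ℝ} {a b t : ℝ} (hf : ContinuousOn f (Icc a b))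
    (ht : t ∈ Ioc a b) (hpos : 0 < f t) : ∃ s ∈ Ico a t, ∀ r ∈ Ioo s t, 0 < f r := by
  have hev : ∀ᶠ r in 𝓝[Icc a b] t, 0 < f r :=
    (hf t (Ioc_subset_Icc_self ht)).eventually (lt_mem_nhds hpos)
  have hleft : Icc a b ∈ 𝓝[<] t := Filter.mem_of_superset (Ioo_mem_nhdsLT ht.1)
    (Ioo_subset_Icc_self.trans (Icc_subset_Icc_right ht.2))
  obtain ⟨l, hl, hsub⟩ :=
    mem_nhdsLT_iff_exists_Ioo_subset.1 (hev.filter_mono (nhdsWithin_le_of_mem hleft))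
  exact ⟨max a l, ⟨le_max_left a l, max_lt ht.1 hl⟩,
    fun r hr => hsub ⟨(le_max_right a l).trans_lt hr.1, hr.2⟩⟩

section IntegralForm

variable {a b : ℝ} {y g : ℝ → ℝ}

theorem continuousOn_of_eq_add_integral (hy : ∀ t ∈ Icc a b, y t = y a + ∫ s in a..t, g s)
    (hg : IntervalIntegrable g volume a b) : ContinuousOn y (Icc a b) := by
  have hprim : ContinuousOn (fun t => ∫ s in a..t, g s) (Icc a b) :=
    (intervalIntegral.continuousOn_primitive_interval
      ((intervalIntegrable_iff' (f := g)).1 hg)).mono Icc_subset_uIcc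
  exact (continuousOn_const.add hprim).congr hy

theorem sub_eq_integral_of_eq_add_integral (hy : ∀ t ∈ Icc a b, y t = y a + ∫ s in a..t, g s)
    (hg : IntervalIntegrable g volume a b) {s t : ℝ} (hs : s ∈ Icc a b) (ht : t ∈ Icc a b) :
    y t - y s = ∫ r in s..t, g r := by
  have hint : ∀ u ∈ Icc a b, IntervalIntegrable g volume a u := fun u hu =>
    hg.mono_set (uIcc_subset_uIcc left_mem_uIcc (Icc_subset_uIcc hu))
  rw [hy t ht, hy s hs, add_sub_add_left_eq_sub]
  exact intervalIntegral.integral_interval_sub_left (hint t ht) (hint s hs)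

theorem lt_of_ae_le_of_hasDerivAt {F w : ℝ → ℝ} (hF : ContinuousOn F (Ioi 0))
    (hF_mono : MonotoneOn F (Ioi 0))
    (hy : ∀ t ∈ Icc a b, y t = y a + ∫ s in a..t, g s) (hg : IntervalIntegrable g volume a b)
    (hgF : ∀ᵐ s ∂volume.restrict (Icc a b), g s ≤ F (y s))
    (hw : ∀ t ∈ Icc a b, HasDerivAt w (F (w t)) t) (hw_pos : ∀ t ∈ Icc a b, 0 < w t)
    (h_start : y a < w a) : ∀ t ∈ Icc a b, y t < w t := by
  have hy_cont := continuousOn_of_eq_add_integral hy hg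
  have hw_cont : ContinuousOn w (Icc a b) := fun t ht =>
    (hw t ht).continuousAt.continuousWithinAt
  intro t₀ ht₀
  by_contra! hcross
  obtain ⟨t₁, ⟨hat₁, ht₁t₀⟩, hcross₁, hbefore⟩ :=
    exists_first_le_of_continuousOn ht₀.1 (hy_cont.mono (Icc_subset_Icc_right ht₀.2))
      (hw_cont.mono (Icc_subset_Icc_right ht₀.2)) h_start hcross
  have ht₁ : t₁ ∈ Icc a b := ⟨hat₁.le, ht₁t₀.trans ht₀.2⟩
  obtain ⟨s, hs, hpos⟩ := hy_cont.exists_Ioo_pos_left ⟨hat₁, ht₁.2⟩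
    ((hw_pos t₁ ht₁).trans_le hcross₁)
  have hsub : Icc s t₁ ⊆ Icc a b := Icc_subset_Icc hs.1 ht₁.2
  have hFw_int : IntervalIntegrable (fun r => F (w r)) volume s t₁ := by
    refine ContinuousOn.intervalIntegrable ?_
    rw [uIcc_of_le hs.2.le]
    exact hF.comp (hw_cont.mono hsub) fun r hr => hw_pos r (hsub hr)
  have hgw : ∀ᵐ r ∂volume.restrict (Icc s t₁), g r ≤ F (w r) := by
    -- discard the endpoint `t₁`, where `w t₁ ≤ y t₁`
    rw [← Measure.restrict_congr_set Ioo_ae_eq_Icc]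
    filter_upwards [ae_restrict_of_ae_restrict_of_subset (Ioo_subset_Icc_self.trans hsub) hgF,
      ae_restrict_mem measurableSet_Ioo] with r hgr hr
    have hr' : r ∈ Icc a b := hsub (Ioo_subset_Icc_self hr)
    exact hgr.trans (hF_mono (hpos r hr) (hw_pos r hr')
      (hbefore r ⟨hr'.1, hr.2⟩).le)
  have hy_diff : y t₁ - y s ≤ w t₁ - w s := by
    rw [sub_eq_integral_of_eq_add_integral hy hg ⟨hs.1, hs.2.le.trans ht₁.2⟩ ht₁,
      ← intervalIntegral.integral_eq_sub_of_hasDerivAt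
        (fun r hr => hw r (hsub (uIcc_of_le hs.2.le ▸ hr))) hFw_int]
    exact intervalIntegral.integral_mono_ae_restrict hs.2.le
      (hg.mono_set (uIcc_subset_uIcc (Icc_subset_uIcc (hsub (left_mem_Icc.2 hs.2.le)))
        (Icc_subset_uIcc ht₁))) hFw_int hgw
  linarith [hbefore s hs]

end IntegralForm

theorem hasDerivAt_add_mul_div_rpow {a c p t : ℝ} (hp : 1 ≤ p) (h : 0 ≤ a + c * t / p) :
    HasDerivAt (fun t => (a + c * t / p) ^ p) (c * |(a + c * t / p) ^ p| ^ (1 - 1 / p)) t := by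
  have hp0 : p ≠ 0 := (zero_lt_one.trans_le hp).ne'
  have hlin : HasDerivAt (fun t => a + c * t / p) (c / p) t := by
    simpa using (((hasDerivAt_id t).const_mul c).div_const p).const_add a
  refine ((Real.hasDerivAt_rpow_const (Or.inr hp)).comp t hlin).congr_deriv ?_
  rw [abs_of_nonneg (Real.rpow_nonneg h p), ← Real.rpow_mul h, mul_sub, mul_one_div_cancel hp0,
    mul_one]
  field_simp

theorem lt_add_mul_div_rpow_of_ae_le {T c p a : ℝ} {y g : ℝ → ℝ} (hc : 0 ≤ c) (hp : 1 ≤ p)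
    (hy : ∀ t ∈ Icc (0 : ℝ) T, y t = y 0 + ∫ s in (0 : ℝ)..t, g s)
    (hg : IntervalIntegrable g volume 0 T)
    (hbound : ∀ᵐ s ∂(volume.restrict (Icc (0 : ℝ) T)), g s ≤ c * |y s| ^ (1 - 1 / p))
    (ha : |y 0| ^ (1 / p) < a) :
    ∀ t ∈ Icc (0 : ℝ) T, y t < (a + c * t / p) ^ p := by
  have hp0 : 0 < p := zero_lt_one.trans_le hp
  have hq : 0 ≤ 1 - 1 / p := sub_nonneg.2 ((div_le_one hp0).2 hp)
  have hbase : ∀ t ∈ Icc (0 : ℝ) T, 0 < a + c * t / p := fun t ht =>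
    add_pos_of_pos_of_nonneg ((Real.rpow_nonneg (abs_nonneg _) _).trans_lt ha)
      (div_nonneg (mul_nonneg hc ht.1) hp0.le)
  refine lt_of_ae_le_of_hasDerivAt (F := fun x => c * |x| ^ (1 - 1 / p))
    (by fun_prop (disch := exact Or.inr hq)) ?_ hy hg hbound
    (fun t ht => hasDerivAt_add_mul_div_rpow hp (hbase t ht).le)
    (fun t ht => Real.rpow_pos_of_pos (hbase t ht) p) ?_
  · intro x hx x' hx' hxx'
    dsimp only
    rw [abs_of_pos hx, abs_of_pos hx']
    gcongr
    exact hx.le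
  · calc y 0 ≤ (|y 0| ^ (1 / p)) ^ p := by
          rw [one_div, Real.rpow_inv_rpow (abs_nonneg _) hp0.ne']; exact le_abs_self _
      _ < a ^ p := by gcongr
      _ = (a + c * 0 / p) ^ p := by simp

theorem stmt4_general (T c p : ℝ) (hc : 0 ≤ c) (hp : 1 ≤ p)
    (y g : ℝ → ℝ)
    (hy : ∀ t ∈ Set.Icc (0 : ℝ) T, y t = y 0 + ∫ s in (0 : ℝ)..t, g s)
    (hg : IntervalIntegrable g volume 0 T)
    (hbound : ∀ᵐ s ∂(volume.restrict (Set.Icc (0 : ℝ) T)),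
      g s ≤ c * |y s| ^ (1 - 1 / p)) :
    ∀ t ∈ Set.Icc (0 : ℝ) T,
      y t ≤ (|y 0| ^ (1 / p) + c * t / p) ^ p ∧
        (|y 0| ^ (1 / p) + c * t / p) ^ p ≤ 2 ^ (p - 1) * (|y 0| + (c * t / p) ^ p) := by
  intro t ht
  have hp0 : 0 < p := zero_lt_one.trans_le hp
  have hA : 0 ≤ |y 0| ^ (1 / p) := Real.rpow_nonneg (abs_nonneg _) _
  have hB : 0 ≤ c * t / p := div_nonneg (mul_nonneg hc ht.1) hp0.le
  constructor
  · have hε : ∀ ε > 0, y t ≤ (|y 0| ^ (1 / p) + ε + c * t / p) ^ p := fun ε hε =>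
      (lt_add_mul_div_rpow_of_ae_le hc hp hy hg hbound (lt_add_of_pos_right _ hε) t ht).le
    have hcont : ContinuousAt (fun ε => (|y 0| ^ (1 / p) + ε + c * t / p) ^ p) 0 := by
      fun_prop (disch := exact Or.inr hp0.le)
    simpa using ge_of_tendsto (hcont.tendsto.mono_left nhdsWithin_le_nhds)
      (eventually_nhdsWithin_of_forall (s := Ioi 0) hε)
  · simpa [Real.rpow_inv_rpow (abs_nonneg (y 0)) hp0.ne'] using
      Real.rpow_add_le_two_rpow_mul_add hA hB hp

/-- Gronwall-type comparison estimate for the differential inequality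
`y' ≤ c |y|^{1-1/p}` a.e., for absolutely continuous `y` (encoded via the
fundamental theorem of calculus with a.e. derivative `g`). -/
theorem stmt4 (T c p : ℝ) (hT : 0 < T) (hc : 0 ≤ c) (hp : 1 ≤ p)
    (y g : ℝ → ℝ)
    (hy : ∀ t ∈ Set.Icc (0 : ℝ) T, y t = y 0 + ∫ s in (0 : ℝ)..t, g s)
    (hg : IntervalIntegrable g volume 0 T)
    (hbound : ∀ᵐ s ∂(volume.restrict (Set.Icc (0 : ℝ) T)),
      g s ≤ c * |y s| ^ (1 - 1 / p)) :
    ∀ t ∈ Set.Icc (0 : ℝ) T,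
      y t ≤ (|y 0| ^ (1 / p) + c * t / p) ^ p ∧
        (|y 0| ^ (1 / p) + c * t / p) ^ p ≤ 2 ^ (p - 1) * (|y 0| + (c * t / p) ^ p) :=
  stmt4_general T c p hc hp y g hy hg hbound
end

section
/- Let c, p ∈ [1,∞), d ∈ ℕ, and let V : ℝ^d → ℝ be continuously differentiable with ‖(∇V)(x)‖ ≤ c |V(x)|^{1-1/p} for almost all x ∈ ℝ^d. Then V(x + y) ≤ |V(x)| + c^p 2^{p-1} ( ‖y‖ |V(x)|^{1 - 1/p} + ‖y‖^p ) for all x, y ∈ ℝ^d. -/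
/-!
Since `∇V` is continuous, the a.e. gradient bound holds everywhere. Along the segment
`g t = V (x + t • y)` it becomes `|g'| ≤ c ‖y‖ |g|^{1-1/p}`, and comparison with the solution
`(|g 0|^{1/p} + c ‖y‖ t / p)^p` of the equality case bounds `|V (x + y)|`. Expanding that
`p`-th power by convexity, `(a + b)^p ≤ a^p + p (a + b)^{p-1} b`, together with
`(a + b)^{p-1} ≤ 2^{p-1} (a^{p-1} + b^{p-1})` gives the stated bound.
-/

open MeasureTheory Set

theorem Continuous.le_of_ae_le {X Y : Type*} [TopologicalSpace X] [MeasurableSpace X]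
    {μ : Measure X} [μ.IsOpenPosMeasure] [TopologicalSpace Y] [Preorder Y]
    [OrderClosedTopology Y] {f g : X → Y} (hf : Continuous f) (hg : Continuous g)
    (h : ∀ᵐ x ∂μ, f x ≤ g x) (x : X) : f x ≤ g x := by
  have hx : x ∈ closure {x | f x ≤ g x} := Measure.dense_of_ae h x
  rwa [(isClosed_le hf hg).closure_eq] at hx

theorem Real.add_rpow_le_two_rpow_mul_rpow_add_rpow {q a b : ℝ} (hq : 0 ≤ q) (ha : 0 ≤ a)
    (hb : 0 ≤ b) : (a + b) ^ q ≤ 2 ^ q * (a ^ q + b ^ q) := calc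
  (a + b) ^ q ≤ (2 * max a b) ^ q := by rw [two_mul]; gcongr <;> simp
  _ = 2 ^ q * max a b ^ q := Real.mul_rpow zero_le_two (le_max_of_le_left ha)
  _ = 2 ^ q * max (a ^ q) (b ^ q) := by rw [Real.rpow_max ha hb hq]
  _ ≤ 2 ^ q * (a ^ q + b ^ q) := by
    gcongr; exact max_le_add_of_nonneg (by positivity) (by positivity)

theorem Real.add_rpow_le_rpow_add_mul {p a b : ℝ} (hp : 1 ≤ p) (ha : 0 ≤ a) (hb : 0 ≤ b) :
    (a + b) ^ p ≤ a ^ p + p * (a + b) ^ (p - 1) * b := by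
  rcases hb.eq_or_lt with rfl | hb
  · simp
  have hslope := (convexOn_rpow hp).slope_le_of_hasDerivAt (mem_Ici.2 ha)
    (mem_Ici.2 (by positivity)) (lt_add_of_pos_right a hb)
    (Real.hasDerivAt_rpow_const (Or.inr hp))
  rw [slope_def_field, add_sub_cancel_left, div_le_iff₀ hb] at hslope
  linarith

theorem abs_le_rpow_of_abs_deriv_le_of_lt {p C K M a b : ℝ} (hp : 1 ≤ p) (hC : 0 ≤ C)
    (hCK : C < K) (hM : 0 < M) {g g' : ℝ → ℝ} (hg : ContinuousOn g (Icc a b))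
    (hg' : ∀ t ∈ Ico a b, HasDerivWithinAt g (g' t) (Ici t) t)
    (hbound : ∀ t ∈ Ico a b, |g' t| ≤ C * |g t| ^ (1 - 1 / p)) (ha : |g a| ≤ M ^ p) :
    ∀ t ∈ Icc a b, |g t| ≤ (M + K * (t - a) / p) ^ p := by
  have hp0 : 0 < p := by linarith
  set L : ℝ → ℝ := fun t => M + K * (t - a) / p
  have hL : ∀ t, HasDerivAt L (K / p) t := fun t => by
    simpa [L, mul_div_right_comm] using
      (((hasDerivAt_id t).sub_const a).const_mul (K / p)).const_add M
  have hLpos : ∀ t ∈ Ico a b, 0 < L t := fun t ht => by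
    have : 0 ≤ K * (t - a) / p :=
      div_nonneg (mul_nonneg (by linarith) (by linarith [ht.1])) hp0.le
    simp only [L]; linarith
  have hB : ∀ t, HasDerivAt (fun s => L s ^ p) (K * L t ^ (p - 1)) t := fun t => by
    convert (hL t).rpow_const (Or.inr hp) using 1
    field_simp
  refine image_norm_le_of_norm_deriv_right_lt_deriv_boundary hg hg' (by simpa [L] using ha) hB ?_
  intro t ht hgt
  have hLt := hLpos t ht
  rw [Real.norm_eq_abs] at hgt ⊢
  have hpow : |g t| ^ (1 - 1 / p) = L t ^ (p - 1) := by
    rw [hgt, ← Real.rpow_mul hLt.le]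
    field_simp
  calc |g' t| ≤ C * L t ^ (p - 1) := hpow ▸ hbound t ht
    _ < K * L t ^ (p - 1) := by gcongr

theorem abs_le_rpow_of_abs_deriv_le {p C a b : ℝ} (hp : 1 ≤ p) (hC : 0 ≤ C)
    {g g' : ℝ → ℝ} (hg : ContinuousOn g (Icc a b))
    (hg' : ∀ t ∈ Ico a b, HasDerivWithinAt g (g' t) (Ici t) t)
    (hbound : ∀ t ∈ Ico a b, |g' t| ≤ C * |g t| ^ (1 - 1 / p)) :
    ∀ t ∈ Icc a b, |g t| ≤ (|g a| ^ (1 / p) + C * (t - a) / p) ^ p := by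
  intro t ht
  have hp0 : 0 < p := by linarith
  set m := |g a| ^ (1 / p)
  have hm : 0 ≤ m := by positivity
  have hgm : |g a| = m ^ p := by
    rw [← Real.rpow_mul (abs_nonneg _), one_div_mul_cancel hp0.ne', Real.rpow_one]
  set F : ℝ → ℝ := fun ε => (m + ε + (C + ε) * (t - a) / p) ^ p
  have hF : ContinuousAt F 0 := by fun_prop (disch := exact Or.inr hp0.le)
  -- The fencing theorem needs a strict inequality at contact points, hence the barriers are
  -- perturbed by `ε` and the bound follows as `ε → 0`.
  have hle : ∀ ε > 0, |g t| ≤ F ε := fun ε hε =>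
    abs_le_rpow_of_abs_deriv_le_of_lt hp hC (lt_add_of_pos_right C hε) (by positivity) hg hg'
      hbound (hgm ▸ by gcongr; linarith) t ht
  have := ge_of_tendsto hF.continuousWithinAt.tendsto
    (eventually_nhdsWithin_of_forall (s := Ioi 0) hle)
  simpa [F] using this

theorem abs_apply_add_le_of_norm_fderiv_le {E : Type*} [NormedAddCommGroup E] [NormedSpace ℝ E]
    {V : E → ℝ} {c p : ℝ} (hp : 1 ≤ p) (hc : 0 ≤ c) (hV : Differentiable ℝ V)
    (hgrad : ∀ z, ‖fderiv ℝ V z‖ ≤ c * |V z| ^ (1 - 1 / p)) (x y : E) :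
    |V (x + y)| ≤ (|V x| ^ (1 / p) + c * ‖y‖ / p) ^ p := by
  set g : ℝ → ℝ := fun t => V (x + t • y)
  have hg : ∀ t, HasDerivAt g (fderiv ℝ V (x + t • y) y) t := fun t =>
    (hV _).hasFDerivAt.comp_hasDerivAt t
      (by simpa using ((hasDerivAt_id t).smul_const y).const_add x)
  have hbound : ∀ t ∈ Ico (0 : ℝ) 1,
      |fderiv ℝ V (x + t • y) y| ≤ c * ‖y‖ * |g t| ^ (1 - 1 / p) := fun t _ => calc
    |fderiv ℝ V (x + t • y) y| ≤ ‖fderiv ℝ V (x + t • y)‖ * ‖y‖ := (fderiv ℝ V _).le_opNorm y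
    _ ≤ c * |g t| ^ (1 - 1 / p) * ‖y‖ := by gcongr; exact hgrad _
    _ = c * ‖y‖ * |g t| ^ (1 - 1 / p) := by ring
  have := abs_le_rpow_of_abs_deriv_le hp (by positivity)
    (fun t _ => (hg t).continuousAt.continuousWithinAt) (fun t _ => (hg t).hasDerivWithinAt)
    hbound 1 (right_mem_Icc.2 zero_le_one)
  simpa [g] using this

theorem Real.rpow_one_div_add_div_rpow_le {p c m n : ℝ} (hp : 1 ≤ p) (hc : 1 ≤ c) (hm : 0 ≤ m)
    (hn : 0 ≤ n) :
    (m ^ (1 / p) + c * n / p) ^ p ≤ m + c ^ p * 2 ^ (p - 1) * (n * m ^ (1 - 1 / p) + n ^ p) := by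
  have hp0 : 0 < p := by linarith
  set a := m ^ (1 / p)
  set b := c * n / p
  have ha : 0 ≤ a := by positivity
  have hb : 0 ≤ b := by positivity
  have hap : a ^ p = m := by
    rw [← Real.rpow_mul hm, one_div_mul_cancel hp0.ne', Real.rpow_one]
  have hap' : a ^ (p - 1) = m ^ (1 - 1 / p) := by
    rw [← Real.rpow_mul hm]; congr 1; field_simp
  have hpb : p * b = c * n := mul_div_cancel₀ _ hp0.ne'
  have hbcn : b ≤ c * n := div_le_self (by positivity) hp
  have hcp : c ≤ c ^ p := by simpa using Real.rpow_le_rpow_of_exponent_le hc hp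
  have hbp : b ^ (p - 1) * (c * n) ≤ c ^ p * n ^ p := calc
    b ^ (p - 1) * (c * n) ≤ (c * n) ^ (p - 1) * (c * n) := by gcongr
    _ = (c * n) ^ p := by
      rw [← Real.rpow_add_one' (by positivity) (by linarith), sub_add_cancel]
    _ = c ^ p * n ^ p := Real.mul_rpow (by linarith) hn
  calc (a + b) ^ p ≤ a ^ p + (a + b) ^ (p - 1) * (p * b) := by
        linarith [Real.add_rpow_le_rpow_add_mul hp ha hb]
    _ ≤ m + 2 ^ (p - 1) * (a ^ (p - 1) + b ^ (p - 1)) * (c * n) := by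
        rw [hap, hpb]; gcongr
        exact Real.add_rpow_le_two_rpow_mul_rpow_add_rpow (by linarith) ha hb
    _ = m + 2 ^ (p - 1) * (c * (n * m ^ (1 - 1 / p)) + b ^ (p - 1) * (c * n)) := by
        rw [hap']; ring
    _ ≤ m + 2 ^ (p - 1) * (c ^ p * (n * m ^ (1 - 1 / p)) + c ^ p * n ^ p) := by gcongr
    _ = m + c ^ p * 2 ^ (p - 1) * (n * m ^ (1 - 1 / p) + n ^ p) := by ring

/-- Refined growth estimate for a `C¹` Lyapunov-type function whose gradient
satisfies `‖∇V(x)‖ ≤ c |V(x)|^{1-1/p}` for Lebesgue-almost all `x`. -/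
theorem stmt8 {d : ℕ} (c p : ℝ) (hc : 1 ≤ c) (hp : 1 ≤ p)
    (V : EuclideanSpace ℝ (Fin d) → ℝ) (hV : ContDiff ℝ 1 V)
    (hgrad : ∀ᵐ x ∂(volume : Measure (EuclideanSpace ℝ (Fin d))),
      ‖fderiv ℝ V x‖ ≤ c * |V x| ^ (1 - 1 / p)) :
    ∀ x y : EuclideanSpace ℝ (Fin d),
      V (x + y) ≤ |V x| + c ^ p * 2 ^ (p - 1) * (‖y‖ * |V x| ^ (1 - 1 / p) + ‖y‖ ^ p) := by
  have hexp : 0 ≤ 1 - 1 / p := sub_nonneg.2 (div_le_one_of_le₀ hp (by linarith))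
  have hgrad' : ∀ z, ‖fderiv ℝ V z‖ ≤ c * |V z| ^ (1 - 1 / p) :=
    Continuous.le_of_ae_le (hV.continuous_fderiv one_ne_zero).norm
      (continuous_const.mul ((Real.continuous_rpow_const hexp).comp hV.continuous.abs)) hgrad
  intro x y
  calc V (x + y) ≤ |V (x + y)| := le_abs_self _
    _ ≤ (|V x| ^ (1 / p) + c * ‖y‖ / p) ^ p :=
      abs_apply_add_le_of_norm_fderiv_le hp (by linarith) (hV.differentiable one_ne_zero) hgrad' x y
    _ ≤ _ := Real.rpow_one_div_add_div_rpow_le hp hc (abs_nonneg _) (norm_nonneg _)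
end

section
/- Let d ∈ ℕ, c ∈ (0,∞), and let μ : ℝ^d → ℝ^d be a function with ⟨x, μ(x)⟩ ≤ c(1 + ‖x‖²) for all x ∈ ℝ^d. Then for all x ∈ ℝ^d and all s, t ∈ [0, 1/(4c)] with s ≤ t it holds that 1 + ‖x - μ(x) s‖² ≤ e^{4c(t-s)} (1 + ‖x - μ(x) t‖²). -/
/-!
Expanding the square, `‖x - s • v‖² - ‖x - t • v‖² = (t - s) (2⟪x, v⟫ - (t + s) ‖v‖²)`, and the
one-sided bound on `⟪x, v⟫` together with `4 c t ≤ 1` controls the bracket by `4 c (1 + ‖x - t • v‖²)`.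
This gives the factor `1 + 4 c (t - s) ≤ exp (4 c (t - s))`.
-/

open RealInnerProductSpace

section

variable {E : Type*} [NormedAddCommGroup E] [InnerProductSpace ℝ E]

lemma norm_sub_smul_sq (x v : E) (r : ℝ) :
    ‖x - r • v‖ ^ 2 = ‖x‖ ^ 2 - 2 * r * ⟪x, v⟫ + r ^ 2 * ‖v‖ ^ 2 := by
  rw [norm_sub_sq_real, real_inner_smul_right, norm_smul, mul_pow, Real.norm_eq_abs, sq_abs]
  ring

lemma two_inner_sub_le_of_inner_le {c s t : ℝ} {x v : E} (hc : 0 ≤ c)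
    (hx : ⟪x, v⟫ ≤ c * (1 + ‖x‖ ^ 2)) (hs : 0 ≤ s) (ht : 0 ≤ t) (hct : 4 * c * t ≤ 1) :
    2 * ⟪x, v⟫ - (t + s) * ‖v‖ ^ 2 ≤ 4 * c * (1 + ‖x - t • v‖ ^ 2) := by
  -- The gap is `2 (c (1 + ‖x‖²) - ⟪x, v⟫) + 2 c ‖x - 2 t • v‖² + 2 c + t ‖v‖² (1 - 4 c t) + s ‖v‖²`.
  nlinarith [mul_nonneg hc (sq_nonneg ‖x - (2 * t) • v‖), mul_nonneg hs (sq_nonneg ‖v‖),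
    mul_nonneg (mul_nonneg ht (sq_nonneg ‖v‖)) (sub_nonneg.2 hct),
    norm_sub_smul_sq x v t, norm_sub_smul_sq x v (2 * t)]

lemma one_add_norm_sub_smul_sq_le {c s t : ℝ} {x v : E} (hc : 0 ≤ c)
    (hx : ⟪x, v⟫ ≤ c * (1 + ‖x‖ ^ 2)) (hs : 0 ≤ s) (hst : s ≤ t) (hct : 4 * c * t ≤ 1) :
    1 + ‖x - s • v‖ ^ 2 ≤ (1 + 4 * c * (t - s)) * (1 + ‖x - t • v‖ ^ 2) := by
  have hbracket := two_inner_sub_le_of_inner_le hc hx hs (hs.trans hst) hct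
  nlinarith [mul_le_mul_of_nonneg_left hbracket (sub_nonneg.2 hst),
    norm_sub_smul_sq x v s, norm_sub_smul_sq x v t]

end

theorem stmt10 {d : ℕ} (c : ℝ) (hc : 0 < c)
    (μ : EuclideanSpace ℝ (Fin d) → EuclideanSpace ℝ (Fin d))
    (hμ : ∀ x, (inner ℝ x (μ x) : ℝ) ≤ c * (1 + ‖x‖ ^ 2)) :
    ∀ (x : EuclideanSpace ℝ (Fin d)) (s t : ℝ),
      s ∈ Set.Icc (0 : ℝ) (1 / (4 * c)) → t ∈ Set.Icc (0 : ℝ) (1 / (4 * c)) → s ≤ t →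
      1 + ‖x - s • μ x‖ ^ 2 ≤ Real.exp (4 * c * (t - s)) * (1 + ‖x - t • μ x‖ ^ 2) := by
  rintro x s t ⟨hs, -⟩ ⟨-, ht⟩ hst
  have hct : 4 * c * t ≤ 1 := by
    rwa [le_div_iff₀ (by positivity), mul_comm] at ht
  calc 1 + ‖x - s • μ x‖ ^ 2
      ≤ (1 + 4 * c * (t - s)) * (1 + ‖x - t • μ x‖ ^ 2) :=
        one_add_norm_sub_smul_sq_le hc.le (hμ x) hs hst hct
    _ ≤ Real.exp (4 * c * (t - s)) * (1 + ‖x - t • μ x‖ ^ 2) := by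
        gcongr
        linarith [Real.add_one_le_exp (4 * c * (t - s))]
end

section
/- Let c ∈ [0,∞), T ∈ (0,∞), let a, b, σ : ℝ → ℝ be Borel measurable with x(a(x)x + b(x)) + (1/2)|σ(x)|² ≤ c(1+x²), a(x) ≤ c, and |b(x)|² ≤ c(1+x²) for all x ∈ ℝ, and let W be a one-dimensional standard Brownian motion. Then for all t ∈ [0, 1/(2c)] and all x ∈ ℝ it holds that E[ 1 + (x + b(x)t + σ(x)W_t)² / (1 - a(x)t)² ] ≤ (1 + x²) e^{(8c+2)t}. -/
open MeasureTheory ProbabilityTheory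
open scoped NNReal

/-!
Since `W_t ~ N(0, t)`, the numerator `x + b(x) t + σ(x) W_t` is Gaussian with mean `x + b(x) t`
and variance `σ(x)² t`, so the expectation equals `1 + ((x + b(x) t)² + σ(x)² t) / (1 - a(x) t)²`.
Expanding the square, the coercivity condition and the growth bound on `b` bound the numerator by
`x² (1 - 2 a(x) t) + K` with `K = (2ct + ct²)(1 + x²)`, while `2ct ≤ 1` gives `1 - a(x) t ≥ 1/2`.
So the quotient is at most `x² + 4K`, and `1 + x² + 4K ≤ (1 + x²)(1 + (8c + 2) t) ≤ (1 + x²) e^{(8c+2)t}`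
because `4ct² ≤ 2t`.
-/

lemma integral_sq_gaussianReal (μ : ℝ) (v : ℝ≥0) :
    ∫ x, x ^ 2 ∂gaussianReal μ v = μ ^ 2 + v := by
  have h := variance_eq_sub (memLp_id_gaussianReal (μ := μ) (v := v) 2)
  simp only [variance_id_gaussianReal, Pi.pow_apply, id, integral_id_gaussianReal] at h
  linarith

lemma integral_one_add_sq_div_gaussianReal (μ : ℝ) (v : ℝ≥0) (D : ℝ) :
    ∫ x, (1 + x ^ 2 / D) ∂gaussianReal μ v = 1 + (μ ^ 2 + v) / D := by
  rw [integral_add (integrable_const 1), integral_div, integral_sq_gaussianReal]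
  · simp
  · exact (memLp_id_gaussianReal 2).integrable_sq.div_const D

lemma ProbabilityTheory.HasLaw.integral_one_add_affine_sq_div_gaussianReal {Ω : Type*} [MeasurableSpace Ω]
    {P : Measure Ω} {X : Ω → ℝ} {μ : ℝ} {v : ℝ≥0} (hX : HasLaw X (gaussianReal μ v) P)
    (A B D : ℝ) :
    ∫ ω, (1 + (A + B * X ω) ^ 2 / D) ∂P = 1 + ((A + B * μ) ^ 2 + B ^ 2 * v) / D := by
  have hY := gaussianReal_const_add (gaussianReal_const_mul hX B) A
  rw [← Function.comp_def (fun y => 1 + y ^ 2 / D),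
    hY.integral_comp (by fun_prop), integral_one_add_sq_div_gaussianReal]
  simp [add_comm A]

lemma one_add_implicit_euler_sq_le_exp {c t x a b s : ℝ} (hc : 0 ≤ c) (ht : 0 ≤ t)
    (htc : 2 * c * t ≤ 1) (h1 : x * (a * x + b) + 1 / 2 * s ^ 2 ≤ c * (1 + x ^ 2))
    (h2 : a ≤ c) (h3 : b ^ 2 ≤ c * (1 + x ^ 2)) :
    1 + ((x + b * t) ^ 2 + s ^ 2 * t) / (1 - a * t) ^ 2
      ≤ (1 + x ^ 2) * Real.exp ((8 * c + 2) * t) := by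
  set K := (2 * c * t + c * t ^ 2) * (1 + x ^ 2)
  have hK : 0 ≤ K := by positivity
  have hd : 1 / 2 ≤ 1 - a * t := by nlinarith
  have hd2 : 1 / 4 ≤ (1 - a * t) ^ 2 := by nlinarith
  have hnum : (x + b * t) ^ 2 + s ^ 2 * t ≤ (x ^ 2 + 4 * K) * (1 - a * t) ^ 2 := by
    nlinarith [mul_le_mul_of_nonneg_left h1 ht, mul_le_mul_of_nonneg_left h3 (sq_nonneg t),
      sq_nonneg (x * a * t), mul_nonneg hK (sub_nonneg.2 hd2)]
  calc 1 + ((x + b * t) ^ 2 + s ^ 2 * t) / (1 - a * t) ^ 2 ≤ 1 + (x ^ 2 + 4 * K) := by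
        gcongr
        exact div_le_of_le_mul₀ (by positivity) (by positivity) hnum
    _ ≤ (1 + x ^ 2) * (1 + (8 * c + 2) * t) := by
        nlinarith [mul_le_mul_of_nonneg_right htc (by positivity : 0 ≤ 2 * t * (1 + x ^ 2))]
    _ ≤ (1 + x ^ 2) * Real.exp ((8 * c + 2) * t) := by
        gcongr
        linarith [Real.add_one_le_exp ((8 * c + 2) * t)]

/-- The Brownian motion enters only through its Gaussian marginals `W_t ~ N(0, t)`; the time
condition `t ∈ [0, 1/(2c)]` is encoded as `0 ≤ t ∧ 2ct ≤ 1`, which for `c = 0` means `t ≥ 0`. -/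
theorem stmt12_general (c : ℝ) (hc : 0 ≤ c)
    (a b σ : ℝ → ℝ)
    (h1 : ∀ x : ℝ, x * (a x * x + b x) + (1 / 2) * (σ x) ^ 2 ≤ c * (1 + x ^ 2))
    (h2 : ∀ x : ℝ, a x ≤ c)
    (h3 : ∀ x : ℝ, (b x) ^ 2 ≤ c * (1 + x ^ 2))
    {Ω : Type*} [MeasurableSpace Ω] (P : Measure Ω)
    (W : ℝ → Ω → ℝ)
    (hW : ∀ t : ℝ, 0 ≤ t → Measure.map (W t) P = gaussianReal 0 (Real.toNNReal t)) :
    ∀ (t x : ℝ), 0 ≤ t → 2 * c * t ≤ 1 →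
      ∫ ω, (1 + (x + b x * t + σ x * W t ω) ^ 2 / (1 - a x * t) ^ 2) ∂P
        ≤ (1 + x ^ 2) * Real.exp ((8 * c + 2) * t) := by
  intro t x ht htc
  have hWt : HasLaw (W t) (gaussianReal 0 t.toNNReal) P :=
    ⟨.of_map_ne_zero (hW t ht ▸ IsProbabilityMeasure.ne_zero _), hW t ht⟩
  rw [hWt.integral_one_add_affine_sq_div_gaussianReal, mul_zero, add_zero,
    Real.coe_toNNReal t ht]
  exact one_add_implicit_euler_sq_le_exp hc ht htc (h1 x) (h2 x) (h3 x)

/-- One-step stability estimate for the linear implicit Euler scheme for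
one-dimensional SDEs. The Brownian motion is encoded via its Gaussian marginals
`W_t ~ N(0,t)`; the time condition `t ∈ [0, 1/(2c)]` is expressed as
`0 ≤ t ∧ 2ct ≤ 1` (which for `c = 0` correctly means all `t ≥ 0`). -/
theorem stmt12 (c T : ℝ) (hc : 0 ≤ c) (hT : 0 < T)
    (a b σ : ℝ → ℝ) (ha : Measurable a) (hb : Measurable b) (hσ : Measurable σ)
    (h1 : ∀ x : ℝ, x * (a x * x + b x) + (1 / 2) * (σ x) ^ 2 ≤ c * (1 + x ^ 2))
    (h2 : ∀ x : ℝ, a x ≤ c)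
    (h3 : ∀ x : ℝ, (b x) ^ 2 ≤ c * (1 + x ^ 2))
    {Ω : Type*} [MeasurableSpace Ω] (P : Measure Ω) [IsProbabilityMeasure P]
    (W : ℝ → Ω → ℝ)
    (hW : ∀ t : ℝ, 0 ≤ t → Measure.map (W t) P = gaussianReal 0 (Real.toNNReal t)) :
    ∀ (t x : ℝ), 0 ≤ t → 2 * c * t ≤ 1 →
      ∫ ω, (1 + (x + b x * t + σ x * W t ω) ^ 2 / (1 - a x * t) ^ 2) ∂P
        ≤ (1 + x ^ 2) * Real.exp ((8 * c + 2) * t) :=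
  stmt12_general c hc a b σ h1 h2 h3 P W hW
end

section
/- Let d ∈ ℕ, T ∈ (0,∞), c, κ ∈ [0,∞), θ ∈ (0,T], let μ : ℝ^d → ℝ^d satisfy ⟨x, μ(x)⟩ ≤ c(1 + ‖x‖²) and ‖μ(x) - μ(y)‖ ≤ c(1 + ‖x‖^κ + ‖y‖^κ)‖x - y‖ for all x, y ∈ ℝ^d, let σ : ℝ^d → ℝ^{d×m} be any function, and suppose φ : ℝ^d × [0,θ] × ℝ^m → ℝ^d satisfies the implicit relation φ(x,t,y) = μ(x + φ(x,t,y))·t + σ(x)·y for all (x,t,y). Then for all (x,t,y) with c·t < 1/2 it holds that ‖x + φ(x,t,y)‖² ≤ ( ‖x‖² + ‖σ(x)‖²_{L(ℝ^m,ℝ^d)} ‖y‖² + cT ) / ( 1 - c t - 1/2 ). -/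
/-! Writing `z = x + φ(x,t,y)`, the implicit relation reads `z = (x + σ(x)y) + t μ(z)`. Pairing it
with `z` gives `‖z‖² = ⟨z, x + σ(x)y⟩ + t⟨z, μ(z)⟩`; Cauchy–Schwarz and Young bound the first term by
`‖z‖²/2 + ‖x + σ(x)y‖²/2`, the one-sided growth bound bounds the second by `ct(1 + ‖z‖²)`, and the
`‖z‖²` terms are absorbed on the left as long as `ct < 1/2`. -/

section ImplicitStep

variable {E : Type*} [NormedAddCommGroup E] [InnerProductSpace ℝ E]

theorem norm_sq_le_of_eq_add_smul_of_inner_le {z a v : E} {c t : ℝ} (ht : 0 ≤ t)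
    (hz : z = a + t • v) (hv : inner ℝ z v ≤ c * (1 + ‖z‖ ^ 2)) :
    (1 / 2 - c * t) * ‖z‖ ^ 2 ≤ ‖a‖ ^ 2 / 2 + c * t := by
  have hsplit : ‖z‖ ^ 2 = inner ℝ z a + t * inner ℝ z v := by
    rw [← real_inner_self_eq_norm_sq]
    nth_rewrite 2 [hz]
    rw [inner_add_right, real_inner_smul_right]
  have hyoung : inner ℝ z a ≤ ‖z‖ ^ 2 / 2 + ‖a‖ ^ 2 / 2 := by
    nlinarith [real_inner_le_norm z a, two_mul_le_add_sq ‖z‖ ‖a‖]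
  nlinarith [mul_le_mul_of_nonneg_left hv ht]

end ImplicitStep

theorem half_norm_add_apply_sq_le {E F : Type*} [SeminormedAddCommGroup E]
    [SeminormedAddCommGroup F] [NormedSpace ℝ E] [NormedSpace ℝ F] (x : E) (A : F →L[ℝ] E)
    (y : F) : ‖x + A y‖ ^ 2 / 2 ≤ ‖x‖ ^ 2 + ‖A‖ ^ 2 * ‖y‖ ^ 2 := by
  have hAy : ‖A y‖ ^ 2 ≤ ‖A‖ ^ 2 * ‖y‖ ^ 2 := by
    rw [← mul_pow]
    exact pow_le_pow_left₀ (norm_nonneg _) (A.le_opNorm y) 2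
  have htri : ‖x + A y‖ ^ 2 ≤ (‖x‖ + ‖A y‖) ^ 2 :=
    pow_le_pow_left₀ (norm_nonneg _) (norm_add_le x (A y)) 2
  nlinarith [add_sq_le (a := ‖x‖) (b := ‖A y‖)]

theorem stmt17_general {d m : ℕ} (T θ c : ℝ) (hθT : θ ≤ T)
    (hc : 0 ≤ c)
    (μ : EuclideanSpace ℝ (Fin d) → EuclideanSpace ℝ (Fin d))
    (hμ1 : ∀ x, (inner ℝ x (μ x) : ℝ) ≤ c * (1 + ‖x‖ ^ 2))
    (σ : EuclideanSpace ℝ (Fin d) → EuclideanSpace ℝ (Fin m) →L[ℝ] EuclideanSpace ℝ (Fin d))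
    (φ : EuclideanSpace ℝ (Fin d) → ℝ → EuclideanSpace ℝ (Fin m) → EuclideanSpace ℝ (Fin d))
    (hφ : ∀ x, ∀ t ∈ Set.Icc (0 : ℝ) θ, ∀ y, φ x t y = t • μ (x + φ x t y) + σ x y) :
    ∀ x, ∀ t ∈ Set.Icc (0 : ℝ) θ, ∀ y, c * t < 1 / 2 →
      ‖x + φ x t y‖ ^ 2
        ≤ (‖x‖ ^ 2 + ‖σ x‖ ^ 2 * ‖y‖ ^ 2 + c * T) / (1 - c * t - 1 / 2) := by
  intro x t ht y hct
  have hz : x + φ x t y = (x + σ x y) + t • μ (x + φ x t y) := by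
    nth_rewrite 1 [hφ x t ht y]
    abel
  have hstep := norm_sq_le_of_eq_add_smul_of_inner_le ht.1 hz (hμ1 _)
  have hctT : c * t ≤ c * T := mul_le_mul_of_nonneg_left (ht.2.trans hθT) hc
  rw [le_div_iff₀ (by linarith)]
  linarith [half_norm_add_apply_sq_le x (σ x) y]

/-- A priori bound for the one-step map of the fully drift-implicit Euler scheme:
if `φ(x,t,y) = μ(x + φ(x,t,y))·t + σ(x)·y` on `ℝ^d × [0,θ] × ℝ^m`, then for
`c·t < 1/2` it holds that
`‖x + φ(x,t,y)‖² ≤ (‖x‖² + ‖σ(x)‖²‖y‖² + cT) / (1 - ct - 1/2)`. -/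
theorem stmt17 {d m : ℕ} (T θ c κ : ℝ) (hT : 0 < T) (hθ : 0 < θ) (hθT : θ ≤ T)
    (hc : 0 ≤ c) (hκ : 0 ≤ κ)
    (μ : EuclideanSpace ℝ (Fin d) → EuclideanSpace ℝ (Fin d))
    (hμ1 : ∀ x, (inner ℝ x (μ x) : ℝ) ≤ c * (1 + ‖x‖ ^ 2))
    (hμ2 : ∀ x y, ‖μ x - μ y‖ ≤ c * (1 + ‖x‖ ^ κ + ‖y‖ ^ κ) * ‖x - y‖)
    (σ : EuclideanSpace ℝ (Fin d) → EuclideanSpace ℝ (Fin m) →L[ℝ] EuclideanSpace ℝ (Fin d))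
    (φ : EuclideanSpace ℝ (Fin d) → ℝ → EuclideanSpace ℝ (Fin m) → EuclideanSpace ℝ (Fin d))
    (hφ : ∀ x, ∀ t ∈ Set.Icc (0 : ℝ) θ, ∀ y, φ x t y = t • μ (x + φ x t y) + σ x y) :
    ∀ x, ∀ t ∈ Set.Icc (0 : ℝ) θ, ∀ y, c * t < 1 / 2 →
      ‖x + φ x t y‖ ^ 2
        ≤ (‖x‖ ^ 2 + ‖σ x‖ ^ 2 * ‖y‖ ^ 2 + c * T) / (1 - c * t - 1 / 2) :=
  stmt17_general T θ c hθT hc μ hμ1 σ φ hφ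
end

section
/- Let α, β, γ, δ ∈ (0,∞) and define μ : ℝ² → ℝ² by μ(x₁,x₂) = (x₂, α(γ - x₁²)x₂ - δx₁) (the drift of the stochastic van der Pol oscillator). Then: (a) there exists c ∈ [0,∞) such that ⟨x, μ(x)⟩ ≤ c(1 + ‖x‖²) for all x ∈ ℝ²; but (b) there exists no c ∈ ℝ such that ⟨x - y, μ(x) - μ(y)⟩ ≤ c ‖x - y‖² for all x, y ∈ ℝ². -/
/-!
Writing `μ` in coordinates, `⟪x, μ x⟫ = (1 - δ) x₀ x₁ + α γ x₁² - α x₀² x₁²`; the last term is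
nonpositive and the others are quadratic in `x`, which gives the growth bound. Along the pairs
`x = (u, u)`, `y = (0, 2u)` the cubic part of `μ` makes `⟪x - y, μ x - μ y⟫ = (α γ + δ - 1) u² + α u⁴`
grow quartically, while `‖x - y‖² = 2u²` grows only quadratically.
-/

open RealInnerProductSpace

namespace EuclideanSpace

lemma inner_fin_two (x y : EuclideanSpace ℝ (Fin 2)) : ⟪x, y⟫ = x 0 * y 0 + x 1 * y 1 := by
  simp [PiLp.inner_apply, Fin.sum_univ_two, mul_comm]

lemma norm_sq_fin_two (x : EuclideanSpace ℝ (Fin 2)) : ‖x‖ ^ 2 = x 0 ^ 2 + x 1 ^ 2 := by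
  rw [← real_inner_self_eq_norm_sq, inner_fin_two]
  ring

end EuclideanSpace

open EuclideanSpace

lemma not_exists_forall_quartic_le_quadratic {a α : ℝ} (hα : 0 < α) :
    ¬ ∃ c : ℝ, ∀ u : ℝ, a * u ^ 2 + α * u ^ 4 ≤ c * u ^ 2 := by
  rintro ⟨c, hc⟩
  set t := (|c - a| + 1) / α
  have ht : 0 < t := by positivity
  have hαt : α * t = |c - a| + 1 := mul_div_cancel₀ _ hα.ne'
  have hle : (a + α * t) * t ≤ c * t := by
    have := hc (Real.sqrt t)
    rwa [show Real.sqrt t ^ 4 = (Real.sqrt t ^ 2) ^ 2 by ring, Real.sq_sqrt ht.le,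
      show a * t + α * t ^ 2 = (a + α * t) * t by ring] at this
  have := le_of_mul_le_mul_right hle ht
  linarith [le_abs_self (c - a)]

section VanDerPol

variable {α γ δ : ℝ} {μ : EuclideanSpace ℝ (Fin 2) → EuclideanSpace ℝ (Fin 2)}

lemma inner_self_vanDerPol
    (hμ : ∀ x : EuclideanSpace ℝ (Fin 2), μ x 0 = x 1 ∧ μ x 1 = α * (γ - x 0 ^ 2) * x 1 - δ * x 0)
    (x : EuclideanSpace ℝ (Fin 2)) :
    ⟪x, μ x⟫ = (1 - δ) * (x 0 * x 1) + α * γ * x 1 ^ 2 - α * (x 0 * x 1) ^ 2 := by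
  rw [inner_fin_two, (hμ x).1, (hμ x).2]
  ring

lemma inner_self_vanDerPol_le (hα : 0 ≤ α)
    (hμ : ∀ x : EuclideanSpace ℝ (Fin 2), μ x 0 = x 1 ∧ μ x 1 = α * (γ - x 0 ^ 2) * x 1 - δ * x 0)
    (x : EuclideanSpace ℝ (Fin 2)) :
    ⟪x, μ x⟫ ≤ (|1 - δ| + |α * γ|) * (1 + ‖x‖ ^ 2) := by
  rw [inner_self_vanDerPol hμ, norm_sq_fin_two]
  have hcross : (1 - δ) * (x 0 * x 1) ≤ |1 - δ| * (x 0 ^ 2 + x 1 ^ 2) := by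
    have : |x 0 * x 1| ≤ x 0 ^ 2 + x 1 ^ 2 := by
      rw [abs_le]
      constructor <;> nlinarith [sq_nonneg (x 0 + x 1), sq_nonneg (x 0 - x 1)]
    calc (1 - δ) * (x 0 * x 1) ≤ |1 - δ| * |x 0 * x 1| := by
          rw [← abs_mul]; exact le_abs_self _
      _ ≤ _ := mul_le_mul_of_nonneg_left this (abs_nonneg _)
  have hsq : α * γ * x 1 ^ 2 ≤ |α * γ| * (x 0 ^ 2 + x 1 ^ 2) := by
    nlinarith [le_abs_self (α * γ), abs_nonneg (α * γ), sq_nonneg (x 0), sq_nonneg (x 1)]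
  linarith [mul_nonneg hα (sq_nonneg (x 0 * x 1)), abs_nonneg (1 - δ), abs_nonneg (α * γ)]

lemma inner_sub_vanDerPol_diagonal
    (hμ : ∀ x : EuclideanSpace ℝ (Fin 2), μ x 0 = x 1 ∧ μ x 1 = α * (γ - x 0 ^ 2) * x 1 - δ * x 0)
    (u : ℝ) :
    ⟪!₂[u, u] - !₂[0, 2 * u], μ !₂[u, u] - μ !₂[0, 2 * u]⟫ =
      (α * γ + δ - 1) * u ^ 2 + α * u ^ 4 := by
  rw [inner_fin_two]
  simp only [PiLp.sub_apply, (hμ _).1, (hμ _).2, Matrix.cons_val_zero, Matrix.cons_val_one,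
    Matrix.cons_val_fin_one]
  ring

lemma norm_sq_sub_diagonal (u : ℝ) : ‖!₂[u, u] - !₂[0, 2 * u]‖ ^ 2 = 2 * u ^ 2 := by
  simp only [norm_sq_fin_two, PiLp.sub_apply, Matrix.cons_val_zero, Matrix.cons_val_one,
    Matrix.cons_val_fin_one]
  ring

end VanDerPol

theorem stmt18_general (α γ δ : ℝ) (hα : 0 < α)
    (μ : EuclideanSpace ℝ (Fin 2) → EuclideanSpace ℝ (Fin 2))
    (hμ : ∀ x : EuclideanSpace ℝ (Fin 2),
      μ x 0 = x 1 ∧ μ x 1 = α * (γ - (x 0) ^ 2) * x 1 - δ * x 0) :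
    (∃ c : ℝ, 0 ≤ c ∧ ∀ x, (inner ℝ x (μ x) : ℝ) ≤ c * (1 + ‖x‖ ^ 2)) ∧
      ¬ ∃ c : ℝ, ∀ x y, (inner ℝ (x - y) (μ x - μ y) : ℝ) ≤ c * ‖x - y‖ ^ 2 := by
  refine ⟨⟨_, by positivity, inner_self_vanDerPol_le hα.le hμ⟩, ?_⟩
  rintro ⟨c, hc⟩
  refine not_exists_forall_quartic_le_quadratic (a := α * γ + δ - 1) hα ⟨2 * c, fun u => ?_⟩
  have := hc !₂[u, u] !₂[0, 2 * u]
  rw [inner_sub_vanDerPol_diagonal hμ, norm_sq_sub_diagonal] at this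
  linarith

/-- The drift of the stochastic van der Pol oscillator satisfies a global
one-sided linear growth condition but is not globally one-sided Lipschitz
continuous. -/
theorem stmt18 (α β γ δ : ℝ) (hα : 0 < α) (hβ : 0 < β) (hγ : 0 < γ) (hδ : 0 < δ)
    (μ : EuclideanSpace ℝ (Fin 2) → EuclideanSpace ℝ (Fin 2))
    (hμ : ∀ x : EuclideanSpace ℝ (Fin 2),
      μ x 0 = x 1 ∧ μ x 1 = α * (γ - (x 0) ^ 2) * x 1 - δ * x 0) :
    (∃ c : ℝ, 0 ≤ c ∧ ∀ x, (inner ℝ x (μ x) : ℝ) ≤ c * (1 + ‖x‖ ^ 2)) ∧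
      ¬ ∃ c : ℝ, ∀ x y, (inner ℝ (x - y) (μ x - μ y) : ℝ) ≤ c * ‖x - y‖ ^ 2 :=
  stmt18_general α γ δ hα μ hμ
end
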